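/- Assume moreover q ≠ 1. Then in the field F(u, x₁, …, x_N) of rational functions in N+1 variables the following partial fraction identity holds: Π_{j=1}^N ((1 − t·u·xⱼ)(1 − q·t⁻¹·u·xⱼ))/((1 − u·xⱼ)(1 − q·u·xⱼ)) = 1 + ((1 − t⁻¹)(q − t)/(q − 1)) · t^{1−N} · Σ_{i=1}^N ( (1/(1 − q·u·xᵢ)) · Π_{k≠i} ((t·xᵢ − x_k)(q·xᵢ − t·x_k))/((xᵢ − x_k)(q·xᵢ − x_k)) − (1/(1 − u·xᵢ)) · Π_{k≠i} ((xᵢ − t·x_k)(t·xᵢ − q·x_k))/((xᵢ − x_k)(xᵢ − q·x_k)) ). (This is the partial fraction decomposition of the Cartan current ψ⁺ used to compute the commutator of the fundamental Macdonald currents.) -/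

import Mathlib

/-! Write the left side as `P(u) / Q(u)` with `Q(u) = ∏ᵢ (1 - aᵢ u)`, where `aᵢ` runs over the
`2N` distinct values `xⱼ`, `q xⱼ`. Since `P` and `Q` have degree `2N` and the same leading
coefficient, `P - Q - Σᵢ rᵢ Q / (1 - aᵢ u)` has degree `< 2N`; choosing `rᵢ` so that it vanishes
at every root `aᵢ⁻¹` of `Q` makes it zero, i.e. `P / Q = 1 + Σᵢ rᵢ / (1 - aᵢ u)`. To find `rᵢ`,
evaluate `P` at `aᵢ⁻¹`: each pair of factors of index `k ≠ i` is `t⁻¹` times the ratio in the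
statement times the matching pair of factors of `Q`, and the pair of index `i` contributes
`(1 - t⁻¹)(q - t)/(q - 1)` against the surviving factor of `Q`. -/

open scoped BigOperators

noncomputable section

/-- The field `F(x₁,…,x_N)` of rational functions in `N` variables over `F`. -/
abbrev RatF (F : Type) [Field F] (N : ℕ) : Type :=
  FractionRing (MvPolynomial (Fin N) F)

/-- The variable `xᵢ` viewed inside the rational function field. -/
noncomputable def Xv (F : Type) [Field F] (N : ℕ) (i : Fin N) : RatF F N :=
  algebraMap (MvPolynomial (Fin N) F) (RatF F N) (MvPolynomial.X i)

open Polynomial Finset Function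

section SumErase
variable {α β M : Type*} [Fintype α] [Fintype β] [DecidableEq α] [DecidableEq β] [CommMonoid M]

theorem Finset.prod_univ_erase_inl (f : α ⊕ β → M) (m : α) :
    ∏ k ∈ univ.erase (Sum.inl m), f k =
      (∏ k ∈ univ.erase m, f (Sum.inl k)) * ∏ k, f (Sum.inr k) := by
  rw [show univ.erase (Sum.inl m) = (univ.erase m).disjSum (univ : Finset β) by
    ext (k | k) <;> simp, prod_disjSum]

theorem Finset.prod_univ_erase_inr (f : α ⊕ β → M) (m : β) :
    ∏ k ∈ univ.erase (Sum.inr m), f k =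
      (∏ k, f (Sum.inl k)) * ∏ k ∈ univ.erase m, f (Sum.inr k) := by
  rw [show univ.erase (Sum.inr m) = (univ : Finset α).disjSum (univ.erase m) by
    ext (k | k) <;> simp, prod_disjSum]

end SumErase

namespace Polynomial

section CommRing
variable {R ι : Type*} [CommRing R]

theorem natDegree_one_sub_C_mul_X_le (a : R) : (1 - C a * X).natDegree ≤ 1 := by
  compute_degree

theorem natDegree_prod_one_sub_C_mul_X_le (s : Finset ι) (a : ι → R) :
    (∏ i ∈ s, (1 - C (a i) * X)).natDegree ≤ #s := by
  refine (natDegree_prod_le _ _).trans ?_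
  rw [card_eq_sum_ones]
  exact sum_le_sum fun i _ => natDegree_one_sub_C_mul_X_le (a i)

theorem coeff_prod_one_sub_C_mul_X_card (s : Finset ι) (a : ι → R) :
    (∏ i ∈ s, (1 - C (a i) * X)).coeff #s = ∏ i ∈ s, -a i := by
  simpa [coeff_one] using coeff_prod_of_natDegree_le s (fun i => 1 - C (a i) * X) 1
    fun i _ => natDegree_one_sub_C_mul_X_le (a i)

theorem degree_prod_one_sub_C_mul_X_sub_lt [Fintype ι] {a b : ι → R} (h : ∏ i, a i = ∏ i, b i) :
    (∏ i, (1 - C (a i) * X) - ∏ i, (1 - C (b i) * X)).degree < (Fintype.card ι : WithBot ℕ) := by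
  rw [degree_lt_iff_coeff_zero]
  intro m hm
  rw [coeff_sub, sub_eq_zero]
  rcases hm.eq_or_lt with rfl | hlt
  · rw [← card_univ, coeff_prod_one_sub_C_mul_X_card, coeff_prod_one_sub_C_mul_X_card, prod_neg,
      prod_neg, h]
  · rw [coeff_eq_zero_of_natDegree_lt ((natDegree_prod_one_sub_C_mul_X_le _ _).trans_lt hlt),
      coeff_eq_zero_of_natDegree_lt ((natDegree_prod_one_sub_C_mul_X_le _ _).trans_lt hlt)]

end CommRing

section Field
variable {L ι : Type*} [Field L] [Fintype ι] [DecidableEq ι] {a : ι → L} {P : L[X]} {c : L}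
  {r : ι → L}

theorem eq_C_mul_prod_add_sum_of_eval_inv (ha : Injective a) (ha0 : ∀ i, a i ≠ 0)
    (hdeg : (P - C c * ∏ i, (1 - C (a i) * X)).degree < Fintype.card ι)
    (hr : ∀ i, P.eval (a i)⁻¹ = r i * ∏ k ∈ univ.erase i, (1 - a k * (a i)⁻¹)) :
    P = C c * ∏ i, (1 - C (a i) * X) + ∑ i, C (r i) * ∏ k ∈ univ.erase i, (1 - C (a k) * X) := by
  rw [← sub_eq_zero, ← sub_sub]
  refine eq_zero_of_degree_lt_of_eval_index_eq_zero univ (v := fun i => (a i)⁻¹)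
    (inv_injective.comp ha).injOn ?_ fun j _ => ?_
  · refine (degree_sub_le _ _).trans_lt (max_lt hdeg ?_)
    refine (degree_sum_le _ _).trans_lt ((Finset.sup_lt_iff (WithBot.bot_lt_coe _)).2 fun i _ => ?_)
    refine degree_le_natDegree.trans_lt (WithBot.coe_lt_coe.2 ((natDegree_C_mul_le _ _).trans_lt
      ((natDegree_prod_one_sub_C_mul_X_le _ _).trans_lt ?_)))
    rw [card_erase_of_mem (mem_univ i), card_univ]
    exact Nat.sub_lt (Fintype.card_pos_iff.2 ⟨i⟩) one_pos
  · have hj : 1 - a j * (a j)⁻¹ = 0 := by rw [mul_inv_cancel₀ (ha0 j), sub_self]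
    simp only [eval_sub, eval_mul, eval_C, eval_prod, eval_finsetSum, eval_one, eval_X]
    rw [prod_eq_zero (mem_univ j) hj, sum_eq_single j
      (fun i _ hij => mul_eq_zero_of_right _ (prod_eq_zero (mem_erase.2 ⟨hij.symm, mem_univ j⟩) hj))
      (fun h => absurd (mem_univ j) h), hr j]
    ring

theorem eval_div_prod_one_sub_eq_add_sum_div (ha : Injective a) (ha0 : ∀ i, a i ≠ 0)
    (hdeg : (P - C c * ∏ i, (1 - C (a i) * X)).degree < Fintype.card ι)
    (hr : ∀ i, P.eval (a i)⁻¹ = r i * ∏ k ∈ univ.erase i, (1 - a k * (a i)⁻¹))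
    {u : L} (hu : ∀ i, 1 - a i * u ≠ 0) :
    P.eval u / ∏ i, (1 - a i * u) = c + ∑ i, r i / (1 - a i * u) := by
  have hQ : ∏ i, (1 - a i * u) ≠ 0 := prod_ne_zero_iff.2 fun i _ => hu i
  rw [eq_C_mul_prod_add_sum_of_eval_inv ha ha0 hdeg hr, div_eq_iff hQ, add_mul, sum_mul]
  simp only [eval_add, eval_mul, eval_C, eval_prod, eval_finsetSum, eval_sub, eval_one, eval_X]
  refine congrArg _ (sum_congr rfl fun i _ => ?_)
  rw [← mul_prod_erase univ _ (mem_univ i), ← mul_assoc, div_mul_cancel₀ _ (hu i)]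

end Field

end Polynomial

section CartanCurrent
variable {L : Type*} [Field L] {N : ℕ} {q t : L} {x : Fin N → L}

theorem zpow_one_sub_eq_prod_erase_inv (t : L) (m : Fin N) :
    t ^ ((1 : ℤ) - N) = ∏ _k ∈ univ.erase m, t⁻¹ := by
  have hN : 1 ≤ N := m.pos
  rw [prod_const, card_erase_of_mem (mem_univ m), card_univ, Fintype.card_fin, inv_pow,
    show (1 : ℤ) - N = -((N - 1 : ℕ) : ℤ) by push_cast [hN]; ring, zpow_neg, zpow_natCast]

theorem psi_numerator_at_inv_x (ht : t ≠ 0) (hq1 : q ≠ 1) (hx0 : ∀ i, x i ≠ 0) (hx : Injective x)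
    (hqx : ∀ i k, q * x i ≠ x k) (m : Fin N) :
    ∏ j, ((1 - t * x j * (x m)⁻¹) * (1 - q * t⁻¹ * x j * (x m)⁻¹))
      = -((1 - t⁻¹) * (q - t) / (q - 1) * t ^ ((1 : ℤ) - N) *
          ∏ k ∈ univ.erase m,
            ((x m - t * x k) * (t * x m - q * x k)) / ((x m - x k) * (x m - q * x k))) *
        ((∏ k ∈ univ.erase m, (1 - x k * (x m)⁻¹)) * ∏ j, (1 - q * x j * (x m)⁻¹)) := by
  have hxm := hx0 m
  have hq1' : q - 1 ≠ 0 := sub_ne_zero.2 hq1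
  have hpole : (1 - t * x m * (x m)⁻¹) * (1 - q * t⁻¹ * x m * (x m)⁻¹)
      = -((1 - t⁻¹) * (q - t) / (q - 1)) * (1 - q * x m * (x m)⁻¹) := by
    field_simp
    ring
  have hfactor : ∀ k ∈ univ.erase m,
      (1 - t * x k * (x m)⁻¹) * (1 - q * t⁻¹ * x k * (x m)⁻¹)
      = t⁻¹ * (((x m - t * x k) * (t * x m - q * x k)) / ((x m - x k) * (x m - q * x k)))
        * ((1 - x k * (x m)⁻¹) * (1 - q * x k * (x m)⁻¹)) := by
    intro k hk
    have h1 : x m - x k ≠ 0 := sub_ne_zero.2 (hx.ne (mem_erase.1 hk).1.symm)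
    have h2 : x m - x k * q ≠ 0 := by rw [mul_comm]; exact sub_ne_zero.2 (hqx k m).symm
    field_simp
  rw [← mul_prod_erase univ _ (mem_univ m),
    ← mul_prod_erase univ (fun j => 1 - q * x j * (x m)⁻¹) (mem_univ m),
    prod_congr rfl hfactor, hpole, zpow_one_sub_eq_prod_erase_inv t m,
    prod_mul_distrib, prod_mul_distrib, prod_mul_distrib]
  ring

theorem psi_numerator_at_inv_qx (hq : q ≠ 0) (ht : t ≠ 0) (hq1 : q ≠ 1) (hx0 : ∀ i, x i ≠ 0)
    (hx : Injective x) (hqx : ∀ i k, q * x i ≠ x k) (m : Fin N) :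
    ∏ j, ((1 - t * x j * (q * x m)⁻¹) * (1 - q * t⁻¹ * x j * (q * x m)⁻¹))
      = ((1 - t⁻¹) * (q - t) / (q - 1) * t ^ ((1 : ℤ) - N) *
          ∏ k ∈ univ.erase m,
            ((t * x m - x k) * (q * x m - t * x k)) / ((x m - x k) * (q * x m - x k))) *
        ((∏ j, (1 - x j * (q * x m)⁻¹)) * ∏ k ∈ univ.erase m, (1 - q * x k * (q * x m)⁻¹)) := by
  have hxm := hx0 m
  have hq1' : q - 1 ≠ 0 := sub_ne_zero.2 hq1
  have hpole : (1 - t * x m * (q * x m)⁻¹) * (1 - q * t⁻¹ * x m * (q * x m)⁻¹)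
      = (1 - t⁻¹) * (q - t) / (q - 1) * (1 - x m * (q * x m)⁻¹) := by
    field_simp
  have hfactor : ∀ k ∈ univ.erase m,
      (1 - t * x k * (q * x m)⁻¹) * (1 - q * t⁻¹ * x k * (q * x m)⁻¹)
      = t⁻¹ * (((t * x m - x k) * (q * x m - t * x k)) / ((x m - x k) * (q * x m - x k)))
        * ((1 - x k * (q * x m)⁻¹) * (1 - q * x k * (q * x m)⁻¹)) := by
    intro k hk
    have h1 : x m - x k ≠ 0 := sub_ne_zero.2 (hx.ne (mem_erase.1 hk).1.symm)
    have h2 : q * x m - x k ≠ 0 := sub_ne_zero.2 (hqx m k)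
    field_simp
  rw [← mul_prod_erase univ
      (fun j => (1 - t * x j * (q * x m)⁻¹) * (1 - q * t⁻¹ * x j * (q * x m)⁻¹)) (mem_univ m),
    ← mul_prod_erase univ (fun j => 1 - x j * (q * x m)⁻¹) (mem_univ m),
    prod_congr rfl hfactor, hpole, zpow_one_sub_eq_prod_erase_inv t m,
    prod_mul_distrib, prod_mul_distrib, prod_mul_distrib]
  ring

theorem psi_eq_one_add_partial_fractions (hq : q ≠ 0) (ht : t ≠ 0) (hq1 : q ≠ 1)
    (hx0 : ∀ i, x i ≠ 0) (hx : Injective x) (hqx : ∀ i k, q * x i ≠ x k) {u : L}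
    (hu1 : ∀ j, 1 - u * x j ≠ 0) (hu2 : ∀ j, 1 - q * (u * x j) ≠ 0) :
    ∏ j, ((1 - t * (u * x j)) * (1 - q * t⁻¹ * (u * x j))) /
        ((1 - u * x j) * (1 - q * (u * x j)))
      = 1 + (1 - t⁻¹) * (q - t) / (q - 1) * t ^ ((1 : ℤ) - N) *
        ∑ i, ((1 - q * (u * x i))⁻¹ * ∏ k ∈ univ.erase i,
            ((t * x i - x k) * (q * x i - t * x k)) / ((x i - x k) * (q * x i - x k))
          - (1 - u * x i)⁻¹ * ∏ k ∈ univ.erase i,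
            ((x i - t * x k) * (t * x i - q * x k)) / ((x i - x k) * (x i - q * x k))) := by
  set K : L := (1 - t⁻¹) * (q - t) / (q - 1) * t ^ ((1 : ℤ) - N)
  set A : Fin N → L := fun i => ∏ k ∈ univ.erase i,
    ((t * x i - x k) * (q * x i - t * x k)) / ((x i - x k) * (q * x i - x k))
  set B : Fin N → L := fun i => ∏ k ∈ univ.erase i,
    ((x i - t * x k) * (t * x i - q * x k)) / ((x i - x k) * (x i - q * x k))
  set poles : Fin N ⊕ Fin N → L := Sum.elim x (q * x ·)
  set zeros : Fin N ⊕ Fin N → L := Sum.elim (t * x ·) (q * t⁻¹ * x ·)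
  have hpoles : Injective poles := by
    rintro (i | i) (k | k) h <;> simp only [poles, Sum.elim_inl, Sum.elim_inr] at h
    · rw [hx h]
    · exact absurd h.symm (hqx k i)
    · exact absurd h (hqx i k)
    · rw [hx (mul_left_cancel₀ hq h)]
  have hpoles0 : ∀ i, poles i ≠ 0 := by
    rintro (i | i)
    exacts [hx0 i, mul_ne_zero hq (hx0 i)]
  have hdeg := degree_prod_one_sub_C_mul_X_sub_lt (a := zeros) (b := poles) <| by
    simp only [zeros, poles, Fintype.prod_sum_type, Sum.elim_inl, Sum.elim_inr, ← prod_mul_distrib]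
    exact prod_congr rfl fun i _ => by field_simp
  have hres : ∀ i, (∏ j, (1 - C (zeros j) * X)).eval (poles i)⁻¹ =
      Sum.elim (fun i => -(K * B i)) (fun i => K * A i) i *
        ∏ k ∈ univ.erase i, (1 - poles k * (poles i)⁻¹) := by
    rintro (m | m) <;>
      simp only [eval_prod, eval_sub, eval_one, eval_mul, eval_C, eval_X, Fintype.prod_sum_type,
        prod_univ_erase_inl, prod_univ_erase_inr, zeros, poles, Sum.elim_inl, Sum.elim_inr,
        ← prod_mul_distrib]
    · exact psi_numerator_at_inv_x ht hq1 hx0 hx hqx m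
    · exact psi_numerator_at_inv_qx hq ht hq1 hx0 hx hqx m
  have hu : ∀ i, 1 - poles i * u ≠ 0 := by
    rintro (i | i)
    · simpa only [poles, Sum.elim_inl, mul_comm] using hu1 i
    · simpa only [poles, Sum.elim_inr, mul_assoc, mul_comm u] using hu2 i
  have key := eval_div_prod_one_sub_eq_add_sum_div hpoles hpoles0 (c := 1)
    (by rwa [C_1, one_mul]) hres hu
  simp only [eval_prod, eval_sub, eval_one, eval_mul, eval_C, eval_X, Fintype.prod_sum_type,
    Fintype.sum_sum_type, zeros, poles, Sum.elim_inl, Sum.elim_inr] at key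
  rw [prod_div_distrib, prod_mul_distrib, prod_mul_distrib, mul_sum]
  rw [← sum_add_distrib] at key
  convert key using 1
  · simp only [mul_comm u, ← mul_assoc]
  · exact congrArg (1 + ·) (sum_congr rfl fun i _ => by simp only [A, B]; ring)

end CartanCurrent

theorem algebraMap_ne_zero_of_eval_ne_zero {F σ K : Type*} [Field F] [CommRing K]
    [Algebra (MvPolynomial σ F) K] [IsFractionRing (MvPolynomial σ F) K]
    {p : MvPolynomial σ F} (v : σ → F) (h : MvPolynomial.eval v p ≠ 0) :
    algebraMap (MvPolynomial σ F) K p ≠ 0 :=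
  (map_ne_zero_iff _ (IsFractionRing.injective _ _)).2 fun hp => h (by rw [hp, map_zero])

section Xv
variable {F : Type} [Field F] {n : ℕ}

theorem Xv_ne_zero (i : Fin n) : Xv F n i ≠ 0 :=
  algebraMap_ne_zero_of_eval_ne_zero (Pi.single i 1) (by simp)

theorem Xv_injective : Injective (Xv F n) := fun _ _ h =>
  MvPolynomial.X_injective (IsFractionRing.injective _ _ h)

theorem algebraMap_mul_Xv_ne_Xv {c : F} (hc0 : c ≠ 0) (hc1 : c ≠ 1) (i k : Fin n) :
    algebraMap F (RatF F n) c * Xv F n i ≠ Xv F n k := by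
  rw [← sub_ne_zero, IsScalarTower.algebraMap_apply F (MvPolynomial (Fin n) F),
    MvPolynomial.algebraMap_eq, Xv, Xv, ← map_mul, ← map_sub]
  refine algebraMap_ne_zero_of_eval_ne_zero (Pi.single i 1) ?_
  by_cases h : k = i <;> simp [h, hc0, sub_ne_zero.2 hc1]

theorem one_sub_algebraMap_mul_Xv_mul_Xv_ne_zero (c : F) (i k : Fin n) :
    1 - algebraMap F (RatF F n) c * (Xv F n i * Xv F n k) ≠ 0 := by
  have := algebraMap_ne_zero_of_eval_ne_zero (K := RatF F n)
    (p := 1 - MvPolynomial.C c * (MvPolynomial.X i * MvPolynomial.X k)) 0 (by simp)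
  rwa [map_sub, map_one, map_mul, map_mul, ← MvPolynomial.algebraMap_eq,
    ← IsScalarTower.algebraMap_apply] at this

end Xv

theorem statement4_general (F : Type) [Field F] (q t : F) (hq : q ≠ 0) (ht : t ≠ 0)
    (hq1 : q ≠ 1) (N : ℕ) :
    (∏ j : Fin N,
        ((1 - t • (Xv F (N + 1) 0 * Xv F (N + 1) j.succ)) *
            (1 - (q * t⁻¹) • (Xv F (N + 1) 0 * Xv F (N + 1) j.succ))) /
          ((1 - Xv F (N + 1) 0 * Xv F (N + 1) j.succ) *
            (1 - q • (Xv F (N + 1) 0 * Xv F (N + 1) j.succ))))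
      = 1 + ((1 - t⁻¹) * (q - t) / (q - 1) * t ^ ((1 : ℤ) - (N : ℤ))) •
          ∑ i : Fin N,
            ((1 - q • (Xv F (N + 1) 0 * Xv F (N + 1) i.succ))⁻¹ *
                ∏ k ∈ Finset.univ.erase i,
                  ((t • Xv F (N + 1) i.succ - Xv F (N + 1) k.succ) *
                      (q • Xv F (N + 1) i.succ - t • Xv F (N + 1) k.succ)) /
                    ((Xv F (N + 1) i.succ - Xv F (N + 1) k.succ) *
                      (q • Xv F (N + 1) i.succ - Xv F (N + 1) k.succ))
              - (1 - Xv F (N + 1) 0 * Xv F (N + 1) i.succ)⁻¹ *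
                ∏ k ∈ Finset.univ.erase i,
                  ((Xv F (N + 1) i.succ - t • Xv F (N + 1) k.succ) *
                      (t • Xv F (N + 1) i.succ - q • Xv F (N + 1) k.succ)) /
                    ((Xv F (N + 1) i.succ - Xv F (N + 1) k.succ) *
                      (Xv F (N + 1) i.succ - q • Xv F (N + 1) k.succ))) := by
  have hF : Injective (algebraMap F (RatF F (N + 1))) := (algebraMap F _).injective
  have key := psi_eq_one_add_partial_fractions (t := algebraMap F _ t) (u := Xv F (N + 1) 0)
    ((_root_.map_ne_zero _).2 hq) ((_root_.map_ne_zero _).2 ht) ((map_ne_one_iff _ hF).2 hq1)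
    (fun i => Xv_ne_zero i.succ) (Xv_injective.comp (Fin.succ_injective _))
    (fun i k => algebraMap_mul_Xv_ne_Xv hq hq1 i.succ k.succ)
    (fun j => by simpa using one_sub_algebraMap_mul_Xv_mul_Xv_ne_zero (1 : F) 0 j.succ)
    (fun j => one_sub_algebraMap_mul_Xv_mul_Xv_ne_zero q 0 j.succ)
  simpa only [Algebra.smul_def, map_mul, map_div₀, map_sub, map_one, map_inv₀, map_zpow₀] using key

/-- the partial fraction decomposition of the Cartan current `ψ⁺` in
`F(u,x₁,…,x_N)` (here `u = X 0` and `xᵢ = X i.succ`):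
`Πⱼ ((1−t u xⱼ)(1−q t⁻¹ u xⱼ))/((1−u xⱼ)(1−q u xⱼ))
 = 1 + ((1−t⁻¹)(q−t)/(q−1))·t^{1−N}·Σᵢ( (1/(1−q u xᵢ))·Πₖ≠ᵢ((t xᵢ−xₖ)(q xᵢ−t xₖ))/((xᵢ−xₖ)(q xᵢ−xₖ))
   − (1/(1−u xᵢ))·Πₖ≠ᵢ((xᵢ−t xₖ)(t xᵢ−q xₖ))/((xᵢ−xₖ)(xᵢ−q xₖ)) )`. -/
theorem statement4 (F : Type) [Field F] [CharZero F] (q t : F) (hq : q ≠ 0) (ht : t ≠ 0)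
    (hq1 : q ≠ 1) (N : ℕ) (hN : 1 ≤ N) :
    (∏ j : Fin N,
        ((1 - t • (Xv F (N + 1) 0 * Xv F (N + 1) j.succ)) *
            (1 - (q * t⁻¹) • (Xv F (N + 1) 0 * Xv F (N + 1) j.succ))) /
          ((1 - Xv F (N + 1) 0 * Xv F (N + 1) j.succ) *
            (1 - q • (Xv F (N + 1) 0 * Xv F (N + 1) j.succ))))
      = 1 + ((1 - t⁻¹) * (q - t) / (q - 1) * t ^ ((1 : ℤ) - (N : ℤ))) •
          ∑ i : Fin N,
            ((1 - q • (Xv F (N + 1) 0 * Xv F (N + 1) i.succ))⁻¹ *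
                ∏ k ∈ Finset.univ.erase i,
                  ((t • Xv F (N + 1) i.succ - Xv F (N + 1) k.succ) *
                      (q • Xv F (N + 1) i.succ - t • Xv F (N + 1) k.succ)) /
                    ((Xv F (N + 1) i.succ - Xv F (N + 1) k.succ) *
                      (q • Xv F (N + 1) i.succ - Xv F (N + 1) k.succ))
              - (1 - Xv F (N + 1) 0 * Xv F (N + 1) i.succ)⁻¹ *
                ∏ k ∈ Finset.univ.erase i,
                  ((Xv F (N + 1) i.succ - t • Xv F (N + 1) k.succ) *
                      (t • Xv F (N + 1) i.succ - q • Xv F (N + 1) k.succ)) /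
                    ((Xv F (N + 1) i.succ - Xv F (N + 1) k.succ) *
                      (Xv F (N + 1) i.succ - q • Xv F (N + 1) k.succ))) :=
  statement4_general F q t hq ht hq1 N

end
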